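/- Let r ≥ 2 and let k_1, …, k_r be variables with K = k_1 + ⋯ + k_r. Then k_1 k_2 ⋯ k_r · (K − 1)_{r−2} = Σ_{j ≥ 1} (k_1^j / j!) · Σ_{(X_1,…,X_j)} ∏_{i=1}^{j} (∏_{ℓ ∈ X_i} k_ℓ) · (K_{X_i} − 1)_{|X_i| − 1}, where the inner sum runs over all ordered j-tuples (X_1, …, X_j) of pairwise disjoint nonempty sets whose union is {2,…,r}, and K_{X_i} = Σ_{u ∈ X_i} k_u. (Equivalently, the right-hand side is the sum over set partitions {X_1,…,X_j} of {2,…,r} of k_1^j ∏_i (∏_{ℓ∈X_i} k_ℓ)(K_{X_i} − 1)_{|X_i|−1}.) This is an identity in ℚ[k_1,…,k_r]. -/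

import Mathlib

/-!
Write `K_C = ∑_{ℓ ∈ C} k_ℓ` and replace `k₁` by a variable `x`. In an ordered partition of
`S = {2, …, r}` into `j` blocks, the block containing a fixed `s ∈ S` can occupy any of the `j`
positions; this absorbs one factor of `j!` and turns the right-hand side into a recursion over
subsets of `S`. The left-hand side `x ∏_{ℓ ∈ S} k_ℓ (x + K_S − 1)_{|S|−1}` obeys the same
recursion by the falling-factorial Hurwitz identity
  `(a + x + K_U − 1)_{|U|} = ∑_{C ⊆ U} (a + K_C − 1)_{|C|} · x (x + K_{U∖C} − 1)_{|U∖C|−1}`,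
where the last factor is read as `1` when `C = U`. That identity is proved by induction on `U`;
the step uses that `∑_{C ⊆ U} (u + K_C − 1)_{|C|} (v + K_{U∖C} − 1)_{|U∖C|}` depends only on
`u + v`. This holds, again by induction on `U`, for shifts `(u, v) ↦ (u + m, v − m)` with
`m ∈ ℕ`, and then for all shifts because both sides are polynomials in the shift.
-/

/-- The falling factorial `(a)_m = a(a−1)⋯(a−m+1)`, for `m ≥ 0` (with `(a)_0 = 1`). -/
def ffall {R : Type*} [CommRing R] (a : R) (m : ℕ) : R :=
  ∏ i ∈ Finset.range m, (a - (i : R))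

open Finset

section FallingFactorial

variable {R T : Type*} [CommRing R] [CommRing T]

@[simp] lemma ffall_zero (a : R) : ffall a 0 = 1 := prod_range_zero _

lemma ffall_succ (a : R) (m : ℕ) : ffall a (m + 1) = ffall a m * (a - m) :=
  prod_range_succ _ _

lemma ffall_succ' (a : R) (m : ℕ) : ffall a (m + 1) = a * ffall (a - 1) m := by
  rw [ffall, ffall, prod_range_succ']
  simp only [Nat.cast_add, Nat.cast_one, Nat.cast_zero, sub_zero, sub_add_eq_sub_sub_swap,
    mul_comm]

lemma ffall_add_one (a : R) (m : ℕ) : ffall (a + 1) m = ffall a m + m * ffall a (m - 1) := by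
  cases m with
  | zero => simp
  | succ m =>
    rw [ffall_succ', add_sub_cancel_right, ffall_succ, Nat.add_sub_cancel]
    push_cast
    ring

lemma map_ffall (φ : R →+* T) (a : R) (m : ℕ) : φ (ffall a m) = ffall (φ a) m := by
  simp [ffall, map_prod]

end FallingFactorial

section Hurwitz

variable {R T α : Type*} [CommRing R] [CommRing T] [DecidableEq α] (k : α → R)

def blockFF (u : R) (C : Finset α) : R := ffall (u + ∑ i ∈ C, k i - 1) #C

def blockConv (U : Finset α) (u v : R) : R :=
  ∑ C ∈ U.powerset, blockFF k u C * blockFF k v (U \ C)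

def abelFF (x : R) (D : Finset α) : R :=
  if D = ∅ then 1 else x * ffall (x + ∑ i ∈ D, k i - 1) (#D - 1)

lemma map_blockConv (φ : R →+* T) (U : Finset α) (u v : R) :
    φ (blockConv k U u v) = blockConv (φ ∘ k) U (φ u) (φ v) := by
  simp [blockConv, blockFF, map_ffall]

lemma blockFF_insert (u : R) {t : α} {C : Finset α} (ht : t ∉ C) :
    blockFF k u (insert t C) = blockFF k (u + k t) C * (u + k t + ∑ i ∈ C, k i - 1 - #C) := by
  rw [blockFF, blockFF, sum_insert ht, card_insert_of_notMem ht, ffall_succ, add_assoc]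

lemma abelFF_insert (x : R) {t : α} {D : Finset α} (ht : t ∉ D) :
    abelFF k x (insert t D) = x * blockFF k (x + k t) D := by
  rw [abelFF, if_neg (insert_ne_empty t D), sum_insert ht, card_insert_of_notMem ht,
    Nat.add_sub_cancel, blockFF, add_assoc]

lemma abelFF_mul (x : R) (D : Finset α) :
    abelFF k x D * (x + ∑ i ∈ D, k i - #D) = x * blockFF k x D := by
  rcases D.eq_empty_or_nonempty with rfl | hD
  · simp [abelFF, blockFF]
  · obtain ⟨m, hm⟩ := Nat.exists_eq_add_one.mpr hD.card_pos
    rw [abelFF, if_neg hD.ne_empty, blockFF, hm, Nat.add_sub_cancel, ffall_succ]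
    push_cast
    ring

lemma blockFF_add_one (u : R) (C : Finset α) :
    blockFF k (u + 1) C = blockFF k u C + ∑ t ∈ C, blockFF k (u + k t) (C.erase t) := by
  have hterm : ∀ t ∈ C,
      blockFF k (u + k t) (C.erase t) = ffall (u + ∑ i ∈ C, k i - 1) (#C - 1) := by
    intro t ht
    rw [blockFF, card_erase_of_mem ht, ← add_sum_erase C k ht, add_assoc]
  rw [sum_congr rfl hterm, sum_const, nsmul_eq_mul, blockFF, blockFF, ← ffall_add_one]
  ring_nf

lemma sum_powerset_sum_eq_sum_sum_powerset_erase {M : Type*} [AddCommMonoid M] (U : Finset α)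
    (F : α → Finset α → M) :
    ∑ C ∈ U.powerset, ∑ t ∈ C, F t C
      = ∑ t ∈ U, ∑ C ∈ (U.erase t).powerset, F t (insert t C) := by
  have hind : ∀ C ∈ U.powerset, ∑ t ∈ C, F t C = ∑ t ∈ U, if t ∈ C then F t C else 0 := by
    intro C hC
    rw [sum_ite_mem, inter_eq_right.mpr (mem_powerset.mp hC)]
  rw [sum_congr rfl hind, sum_comm]
  refine sum_congr rfl fun t ht => ?_
  conv_lhs => rw [← insert_erase ht]
  rw [sum_powerset_insert (notMem_erase t U), sum_eq_zero, zero_add]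
  · exact sum_congr rfl fun C _ => if_pos (mem_insert_self t C)
  · intro C hC
    exact if_neg fun htC => notMem_erase t U (mem_powerset.mp hC htC)

lemma blockConv_comm (U : Finset α) (u v : R) : blockConv k U u v = blockConv k U v u := by
  refine sum_nbij' (U \ ·) (U \ ·) (by simp) (by simp) ?_ ?_ ?_ <;>
    intro C hC <;> simp only [mem_powerset] at hC
  · exact Finset.sdiff_sdiff_eq_self hC
  · exact Finset.sdiff_sdiff_eq_self hC
  · rw [Finset.sdiff_sdiff_eq_self hC, mul_comm]

lemma blockConv_add_one_left (U : Finset α) (u v : R) :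
    blockConv k U (u + 1) v
      = blockConv k U u v + ∑ t ∈ U, blockConv k (U.erase t) (u + k t) v := by
  simp only [blockConv, blockFF_add_one, add_mul, sum_add_distrib, sum_mul]
  rw [sum_powerset_sum_eq_sum_sum_powerset_erase]
  refine congrArg _ (sum_congr rfl fun t _ => sum_congr rfl fun C hC => ?_)
  have htC : t ∉ C := fun h => notMem_erase t U (mem_powerset.mp hC h)
  rw [erase_insert htC, sdiff_insert, erase_sdiff_comm]

lemma blockConv_add_one_right (U : Finset α) (u v : R) :
    blockConv k U u (v + 1)
      = blockConv k U u v + ∑ t ∈ U, blockConv k (U.erase t) u (v + k t) := by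
  simp only [blockConv_comm k _ u, blockConv_add_one_left]

open Polynomial in
lemma blockConv_add_left_of_natCast [IsDomain R] [CharZero R] {U : Finset α} (u v w : R)
    (hnat : ∀ (m : ℕ) (u v : R), blockConv k U (u + m) v = blockConv k U u (v + m)) :
    blockConv k U (u + w) v = blockConv k U u (v + w) := by
  have heval : ∀ (p q : R[X]) (y : R),
      eval y (blockConv (C ∘ k) U p q) = blockConv k U (p.eval y) (q.eval y) := by
    intro p q y
    rw [← coe_evalRingHom, map_blockConv]
    congr 1
    ext i
    simp
  have hpoly : blockConv (C ∘ k) U (C u + X) (C v) = blockConv (C ∘ k) U (C u) (C v + X) := by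
    refine eq_of_infinite_eval_eq _ _ (Set.infinite_of_injective_forall_mem Nat.cast_injective ?_)
    intro m
    simp [heval, hnat]
  simpa [heval] using congrArg (eval w) hpoly

theorem blockConv_add_left [IsDomain R] [CharZero R] (U : Finset α) (u v w : R) :
    blockConv k U (u + w) v = blockConv k U u (v + w) := by
  induction U using Finset.strongInduction generalizing u v w with
  | H U ih =>
    refine blockConv_add_left_of_natCast k u v w fun m => ?_
    induction m with
    | zero => simp
    | succ m ihm =>
      intro u v
      have hstep : blockConv k U (u + 1) (v + m) = blockConv k U u (v + m + 1) := by
        rw [blockConv_add_one_left, blockConv_add_one_right]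
        exact congrArg _ (sum_congr rfl fun t ht => ih _ (erase_ssubset ht) _ _ _)
      rw [Nat.cast_succ, ← add_assoc, add_right_comm, ihm, hstep, add_assoc]

theorem blockFF_add_eq_sum_blockFF_mul_abelFF [IsDomain R] [CharZero R] (U : Finset α)
    (a x : R) :
    blockFF k (a + x) U = ∑ C ∈ U.powerset, blockFF k a C * abelFF k x (U \ C) := by
  induction U using Finset.induction_on generalizing a with
  | empty => simp [blockFF, abelFF]
  | insert t U ht ih =>
    have hfirst : ∑ C ∈ U.powerset, blockFF k a C * abelFF k x (insert t U \ C)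
        = x * blockConv k U (a + k t) x := by
      rw [blockConv_add_left, blockConv, mul_sum]
      refine sum_congr rfl fun C hC => ?_
      have htC : t ∉ U \ C := fun h => ht (mem_sdiff.mp h).1
      rw [insert_sdiff_of_notMem _ fun h => ht (mem_powerset.mp hC h), abelFF_insert k x htC]
      ring
    rw [blockFF_insert k _ ht, add_right_comm a x, ih, sum_mul, sum_powerset_insert ht, hfirst,
      blockConv, mul_sum, ← sum_add_distrib]
    refine sum_congr rfl fun C hC => ?_
    rw [mem_powerset] at hC
    have hK : ∑ i ∈ U, k i = ∑ i ∈ U \ C, k i + ∑ i ∈ C, k i := (sum_sdiff hC).symm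
    have hcard : (#U : R) = #(U \ C) + #C := by
      exact_mod_cast (card_sdiff_add_card_eq_card hC).symm
    rw [insert_sdiff_insert, sdiff_insert_of_notMem ht, blockFF_insert k a fun h => ht (hC h), hK,
      hcard]
    linear_combination blockFF k (a + k t) C * abelFF_mul k x (U \ C)

end Hurwitz

section OrderedPartition

variable {α M : Type*} [CommSemiring M] {j : ℕ}

lemma pairwise_disjoint_insertNth_iff (p : Fin (j + 1)) (B : Finset α) (c : Fin j → Finset α) :
    Pairwise (Function.onFun Disjoint (p.insertNth B c)) ↔
      (∀ i, Disjoint B (c i)) ∧ Pairwise (Function.onFun Disjoint c) := by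
  simp only [Pairwise, Function.onFun, Fin.forall_iff_succAbove p, Fin.insertNth_apply_same,
    Fin.insertNth_apply_succAbove, ne_eq, not_true_eq_false, IsEmpty.forall_iff, true_and,
    (Fin.succAbove_ne p _).symm, Fin.succAbove_ne, not_false_eq_true, forall_const,
    Fin.succAbove_right_inj, disjoint_comm (b := B)]
  exact ⟨fun h => ⟨h.1, fun i i' => (h.2 i).2 i'⟩, fun h => ⟨h.1, fun i => ⟨h.1 i, @h.2 i⟩⟩⟩

variable [DecidableEq α]

def IsOrderedPartition (S : Finset α) (c : Fin j → Finset α) : Prop :=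
  (∀ i, (c i).Nonempty) ∧ Pairwise (Function.onFun Disjoint c) ∧ univ.biUnion c = S

lemma isOrderedPartition_zero_iff {S : Finset α} {c : Fin 0 → Finset α} :
    IsOrderedPartition S c ↔ S = ∅ := by
  simp [IsOrderedPartition, eq_comm]

lemma biUnion_insertNth (p : Fin (j + 1)) (B : Finset α) (c : Fin j → Finset α) :
    univ.biUnion (p.insertNth B c) = B ∪ univ.biUnion c := by
  ext x
  simp [Fin.exists_iff_succAbove p]

lemma isOrderedPartition_insertNth_iff {S : Finset α} (p : Fin (j + 1)) (B : Finset α)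
    (c : Fin j → Finset α) :
    IsOrderedPartition S (p.insertNth B c) ↔
      B.Nonempty ∧ B ⊆ S ∧ IsOrderedPartition (S \ B) c := by
  simp only [IsOrderedPartition, Fin.forall_iff_succAbove p, Fin.insertNth_apply_same,
    Fin.insertNth_apply_succAbove, pairwise_disjoint_insertNth_iff, biUnion_insertNth]
  have hdisj : (∀ i, Disjoint B (c i)) ↔ Disjoint B (univ.biUnion c) := by
    simp [disjoint_biUnion_right]
  rw [hdisj]
  constructor
  · rintro ⟨⟨hB, hc⟩, ⟨hdisj, hpw⟩, rfl⟩
    exact ⟨hB, subset_union_left, hc, hpw, (union_sdiff_cancel_left hdisj).symm⟩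
  · rintro ⟨hB, hBS, hc, hpw, hU⟩
    exact ⟨⟨hB, hc⟩, ⟨hU ▸ disjoint_sdiff, hpw⟩, hU ▸ union_sdiff_of_subset hBS⟩

lemma IsOrderedPartition.existsUnique_mem {S : Finset α} {c : Fin j → Finset α}
    (hc : IsOrderedPartition S c) {s : α} (hs : s ∈ S) : ∃! p, s ∈ c p := by
  obtain ⟨-, hpw, rfl⟩ := hc
  obtain ⟨p, -, hp⟩ := mem_biUnion.mp hs
  exact ⟨p, hp, fun q hq => by_contra fun hqp => disjoint_left.mp (hpw hqp) hq hp⟩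

lemma IsOrderedPartition.card_le {S : Finset α} {c : Fin j → Finset α}
    (hc : IsOrderedPartition S c) : j ≤ #S := by
  obtain ⟨hne, hpw, rfl⟩ := hc
  simpa using card_le_card_biUnion (s := univ) (fun p _ q _ hpq => hpw hpq) fun p _ => hne p

open scoped Classical in
noncomputable def orderedPartitions (S : Finset α) (j : ℕ) : Finset (Fin j → Finset α) :=
  {c ∈ Fintype.piFinset fun _ => S.powerset | IsOrderedPartition S c}

lemma mem_orderedPartitions {S : Finset α} {c : Fin j → Finset α} :
    c ∈ orderedPartitions S j ↔ IsOrderedPartition S c := by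
  simp only [orderedPartitions, mem_filter, and_iff_right_iff_imp, Fintype.mem_piFinset]
  rintro ⟨-, -, rfl⟩ i
  exact mem_powerset.mpr (subset_biUnion_of_mem c (mem_univ i))

noncomputable def partitionSum (w : Finset α → M) (S : Finset α) (j : ℕ) : M :=
  ∑ c ∈ orderedPartitions S j, ∏ i, w (c i)

variable (w : Finset α → M)

lemma partitionSum_empty_zero : partitionSum w ∅ 0 = 1 := by
  have : orderedPartitions (∅ : Finset α) 0 = {Fin.elim0} := by
    ext c
    simp [mem_orderedPartitions, isOrderedPartition_zero_iff, Subsingleton.elim c Fin.elim0]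
  simp [partitionSum, this]

lemma partitionSum_zero_of_nonempty {S : Finset α} (hS : S.Nonempty) : partitionSum w S 0 = 0 :=
  sum_eq_zero fun _ hc => absurd (isOrderedPartition_zero_iff.mp (mem_orderedPartitions.mp hc))
    hS.ne_empty

lemma partitionSum_eq_zero_of_card_lt {S : Finset α} (h : #S < j) : partitionSum w S j = 0 :=
  sum_eq_zero fun _ hc => absurd (mem_orderedPartitions.mp hc).card_le (not_le.mpr h)

lemma sum_orderedPartitions_ite_mem {S : Finset α} {s : α} (hs : s ∈ S) (p : Fin (j + 1)) :
    ∑ c ∈ orderedPartitions S (j + 1), (if s ∈ c p then ∏ i, w (c i) else 0)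
      = ∑ C ∈ (S.erase s).powerset, w (insert s C) * partitionSum w (S \ insert s C) j := by
  simp_rw [partitionSum, mul_sum]
  rw [← sum_filter, sum_sigma']
  refine sum_nbij' (fun c => ⟨(c p).erase s, p.removeNth c⟩)
    (fun x => p.insertNth (insert s x.1) x.2) ?_ ?_ ?_ ?_ ?_
  · intro c hc
    simp only [mem_filter, mem_orderedPartitions, mem_sigma, mem_powerset] at hc ⊢
    obtain ⟨hc, hsc⟩ := hc
    rw [← Fin.insertNth_self_removeNth p c, isOrderedPartition_insertNth_iff] at hc
    exact ⟨erase_subset_erase s hc.2.1, by rw [insert_erase hsc]; exact hc.2.2⟩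
  · rintro ⟨C, c⟩ hx
    simp only [mem_filter, mem_orderedPartitions, mem_sigma, mem_powerset] at hx ⊢
    rw [isOrderedPartition_insertNth_iff, Fin.insertNth_apply_same]
    exact ⟨⟨insert_nonempty s C, insert_subset hs (hx.1.trans (erase_subset s S)), hx.2⟩,
      mem_insert_self s C⟩
  · intro c hc
    simp only [mem_filter] at hc
    simp [insert_erase hc.2]
  · rintro ⟨C, c⟩ hx
    simp only [mem_sigma, mem_powerset] at hx
    simp [erase_insert fun h => notMem_erase s S (hx.1 h)]
  · intro c hc
    simp only [mem_filter] at hc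
    rw [insert_erase hc.2, Fin.prod_univ_succAbove _ p]
    rfl

theorem partitionSum_succ {S : Finset α} {s : α} (hs : s ∈ S) :
    partitionSum w S (j + 1) = (j + 1) •
      ∑ C ∈ (S.erase s).powerset, w (insert s C) * partitionSum w (S \ insert s C) j := by
  have hblock : ∀ c ∈ orderedPartitions S (j + 1),
      ∏ i, w (c i) = ∑ p, if s ∈ c p then ∏ i, w (c i) else 0 := by
    intro c hc
    obtain ⟨p, hp, huniq⟩ := (mem_orderedPartitions.mp hc).existsUnique_mem hs
    rw [Fintype.sum_eq_single p fun q hq => if_neg fun h => hq (huniq q h), if_pos hp]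
  rw [partitionSum, sum_congr rfl hblock, sum_comm]
  simp [sum_orderedPartitions_ite_mem w hs]

end OrderedPartition

section AbelExponential

open Nat

variable {R α : Type*} [CommRing R] [DecidableEq α] (k : α → R)

def blockWeight (B : Finset α) : R := (∏ ℓ ∈ B, k ℓ) * ffall (∑ ℓ ∈ B, k ℓ - 1) (#B - 1)

lemma blockWeight_insert {s : α} {C : Finset α} (hs : s ∉ C) :
    blockWeight k (insert s C) = k s * (∏ ℓ ∈ C, k ℓ) * blockFF k (k s) C := by
  rw [blockWeight, prod_insert hs, sum_insert hs, card_insert_of_notMem hs, Nat.add_sub_cancel,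
    blockFF, add_sub_assoc]

theorem prod_mul_abelFF_eq_sum_blockWeight [IsDomain R] [CharZero R] {S : Finset α} {s : α}
    (hs : s ∈ S) (x : R) :
    (∏ ℓ ∈ S, k ℓ) * abelFF k x S = x * ∑ C ∈ (S.erase s).powerset, blockWeight k (insert s C) *
      ((∏ ℓ ∈ S \ insert s C, k ℓ) * abelFF k x (S \ insert s C)) := by
  have hsU : s ∉ S.erase s := notMem_erase s S
  conv_lhs => rw [← insert_erase hs]
  rw [prod_insert hsU, abelFF_insert k x hsU, add_comm x, blockFF_add_eq_sum_blockFF_mul_abelFF,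
    mul_left_comm, mul_sum]
  refine congrArg _ (sum_congr rfl fun C hC => ?_)
  rw [mem_powerset] at hC
  rw [blockWeight_insert k fun h => hsU (hC h), sdiff_insert, ← erase_sdiff_comm,
    ← prod_sdiff (f := k) hC]
  ring

lemma algebraMap_inv_factorial_succ_mul [Algebra ℚ R] (j : ℕ) :
    algebraMap ℚ R ((j + 1)! : ℚ)⁻¹ * (j + 1 : ℕ) = algebraMap ℚ R (j ! : ℚ)⁻¹ := by
  rw [← map_natCast (algebraMap ℚ R), ← map_mul, Nat.factorial_succ]
  congr 1
  push_cast
  field_simp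

theorem prod_mul_abelFF_eq_sum_partitionSum [IsDomain R] [Algebra ℚ R] (x : R) {S : Finset α}
    {n : ℕ} (hn : #S < n) :
    (∏ ℓ ∈ S, k ℓ) * abelFF k x S
      = ∑ j ∈ range n, algebraMap ℚ R (j ! : ℚ)⁻¹ * x ^ j * partitionSum (blockWeight k) S j := by
  have : CharZero R := (RingHom.charZero_iff (algebraMap ℚ R).injective).mp inferInstance
  induction n generalizing S with
  | zero => exact absurd hn (Nat.not_lt_zero _)
  | succ n ih =>
    rw [sum_range_succ']
    rcases S.eq_empty_or_nonempty with rfl | ⟨s, hs⟩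
    · rw [sum_eq_zero fun j _ => by rw [partitionSum_eq_zero_of_card_lt _ (by simp), mul_zero]]
      simp [abelFF, partitionSum_empty_zero]
    have hterm : ∀ j ∈ range n, algebraMap ℚ R ((j + 1)! : ℚ)⁻¹ * x ^ (j + 1)
          * partitionSum (blockWeight k) S (j + 1)
        = x * ∑ C ∈ (S.erase s).powerset, blockWeight k (insert s C) * (algebraMap ℚ R (j ! : ℚ)⁻¹
            * x ^ j * partitionSum (blockWeight k) (S \ insert s C) j) := by
      intro j _
      rw [partitionSum_succ _ hs, nsmul_eq_mul, ← algebraMap_inv_factorial_succ_mul (R := R) j,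
        mul_sum, mul_sum, mul_sum]
      exact sum_congr rfl fun C _ => by ring
    have hcard : ∀ C ∈ (S.erase s).powerset, #(S \ insert s C) < n := fun C hC =>
      have hsub := insert_subset hs ((mem_powerset.mp hC).trans (erase_subset s S))
      (card_lt_card (sdiff_ssubset hsub (insert_nonempty s C))).trans_le (Nat.lt_succ_iff.mp hn)
    rw [sum_congr rfl hterm, ← mul_sum, sum_comm, partitionSum_zero_of_nonempty _ ⟨s, hs⟩, mul_zero,
      add_zero, prod_mul_abelFF_eq_sum_blockWeight k hs]
    congr 1
    refine sum_congr rfl fun C hC => ?_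
    rw [← mul_sum, ih (hcard C hC)]

end AbelExponential

/-- The identity proved via multivariate Lagrange inversion: for `r ≥ 2`,
`k_1 ⋯ k_r · (K − 1)_{r−2}
  = Σ_{j ≥ 1} (k_1^j / j!) Σ_{(X_1,…,X_j)} ∏_{i=1}^{j} (∏_{ℓ ∈ X_i} k_ℓ) (K_{X_i} − 1)_{|X_i|−1}`,
where `K = k_1 + ⋯ + k_r`, the inner sum is over ordered `j`-tuples of pairwise disjoint
nonempty sets with union `{2, …, r}`, and `K_{X_i} = Σ_{u ∈ X_i} k_u`.
This is an identity in `ℚ[k_1, …, k_r]` (the variable `i` is `k_i`). -/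
theorem stmt14 (r : ℕ) (hr : 2 ≤ r) :
    (∏ i ∈ Finset.Icc 1 r, (MvPolynomial.X i : MvPolynomial ℕ ℚ)) *
        ffall ((∑ i ∈ Finset.Icc 1 r, MvPolynomial.X i) - 1) (r - 2)
      = ∑ᶠ (j : ℕ) (_ : 1 ≤ j),
          MvPolynomial.C ((j.factorial : ℚ)⁻¹) * MvPolynomial.X 1 ^ j *
            ∑ᶠ (c : Fin j → Finset ℕ)
              (_ : (∀ i, (c i).Nonempty) ∧ Pairwise (Function.onFun Disjoint c) ∧
                    Finset.univ.biUnion c = Finset.Icc 2 r),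
              ∏ i : Fin j,
                (∏ ℓ ∈ c i, MvPolynomial.X ℓ) *
                  ffall ((∑ u ∈ c i, MvPolynomial.X u) - 1) ((c i).card - 1) := by
  set S := Finset.Icc 2 r
  have hS : S.Nonempty := ⟨2, mem_Icc.mpr ⟨le_rfl, hr⟩⟩
  have h1S : 1 ∉ S := by simp [S]
  have hcard : #S = r - 1 := by simp [S]
  have hlhs : (∏ i ∈ Finset.Icc 1 r, (MvPolynomial.X i : MvPolynomial ℕ ℚ)) *
      ffall ((∑ i ∈ Finset.Icc 1 r, MvPolynomial.X i) - 1) (r - 2)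
        = (∏ ℓ ∈ S, MvPolynomial.X ℓ) * abelFF MvPolynomial.X (MvPolynomial.X 1) S := by
    rw [show Finset.Icc 1 r = insert 1 S by ext; simp [S]; omega, prod_insert h1S, sum_insert h1S,
      abelFF, if_neg hS.ne_empty, hcard, show r - 1 - 1 = r - 2 by omega, add_sub_assoc]
    ring
  have hinner : ∀ j, ∑ᶠ (c : Fin j → Finset ℕ) (_ : IsOrderedPartition S c),
      ∏ i, blockWeight (MvPolynomial.X (R := ℚ)) (c i)
        = partitionSum (blockWeight MvPolynomial.X) S j :=
    fun j => finsum_cond_eq_sum_of_cond_iff _ fun _ => mem_orderedPartitions.symm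
  simp only [IsOrderedPartition, blockWeight] at hinner
  simp only [hinner]
  rw [hlhs, prod_mul_abelFF_eq_sum_partitionSum _ _ (n := r) (by omega),
    finsum_cond_eq_sum_of_cond_iff _ (t := range r), MvPolynomial.algebraMap_eq]
  intro j hj
  have hP := right_ne_zero_of_mul hj
  have hj0 : j ≠ 0 := by rintro rfl; exact hP (partitionSum_zero_of_nonempty _ hS)
  have hjS : j ≤ #S := not_lt.mp fun h => hP (partitionSum_eq_zero_of_card_lt _ h)
  rw [mem_range]
  omega
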